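/- On the disk K of radius h centered at the origin, the mass matrix entries of the plane-wave basis satisfy M_{m,ℓ} = ∫₀^{2π} exp(iκh(d_m − d_ℓ)·(cos t, sin t)) h dt = 2πh J₀(2κh sin(π(m−ℓ)/p)), where J₀ is the Bessel function of the first kind of order zero. -/

import Mathlib

open Real Complex intervalIntegral

noncomputable def besselJ0 (y : ℝ) : ℂ :=
  (1 / (2 * π)) * ∫ s in (0:ℝ)..(2 * π), Complex.exp (Complex.I * y * Real.sin s)

/-- On the disk of radius h, the mass matrix entry
∫₀^{2π} exp(iκh(d_m − d_ℓ)·(cos t, sin t)) h dt = 2πh J₀(2κh sin(π(m−ℓ)/p)). -/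
theorem stmt13 (κ h : ℝ) (hκ : 0 < κ) (hh : 0 < h) (p : ℕ) (hp : 0 < p)
    (m ℓ : ℤ) (θ : ℤ → ℝ) (hθ : ∀ k, θ k = 2 * π * k / p) :
    (∫ t in (0:ℝ)..(2 * π),
      Complex.exp (Complex.I * κ * h *
        ((Real.cos (θ m) - Real.cos (θ ℓ)) * Real.cos t +
         (Real.sin (θ m) - Real.sin (θ ℓ)) * Real.sin t)) * (h : ℂ)) =
    2 * π * h * besselJ0 (2 * κ * h * Real.sin (π * (m - ℓ) / p)) := by
  have hp' : (p:ℝ) ≠ 0 := Nat.cast_ne_zero.mpr hp.ne'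
  set φ : ℝ := (θ m + θ ℓ) / 2 with hφ
  set y : ℝ := 2 * κ * h * Real.sin (π * (m - ℓ) / p) with hy
  have hΔ : (θ m - θ ℓ) / 2 = π * (m - ℓ) / p := by
    rw [hθ, hθ]; field_simp
  have key : ∀ t : ℝ,
      (Real.cos (θ m) - Real.cos (θ ℓ)) * Real.cos t +
        (Real.sin (θ m) - Real.sin (θ ℓ)) * Real.sin t
      = 2 * Real.sin (π * (m - ℓ) / p) * Real.sin (t - φ) := by
    intro t
    rw [← hΔ, Real.cos_sub_cos, Real.sin_sub_sin, Real.sin_sub, hφ]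
    ring
  have h1 : (∫ t in (0:ℝ)..(2 * π),
      Complex.exp (Complex.I * κ * h *
        ((Real.cos (θ m) - Real.cos (θ ℓ)) * Real.cos t +
         (Real.sin (θ m) - Real.sin (θ ℓ)) * Real.sin t)) * (h : ℂ))
      = ∫ t in (0:ℝ)..(2 * π), Complex.exp (Complex.I * y * Real.sin (t - φ)) * (h : ℂ) := by
    apply intervalIntegral.integral_congr
    intro t _
    simp only
    congr 1
    have hk : ((((Real.cos (θ m) - Real.cos (θ ℓ)) * Real.cos t +
        (Real.sin (θ m) - Real.sin (θ ℓ)) * Real.sin t : ℝ)) : ℂ)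
        = ((2 * Real.sin (π * (m - ℓ) / p) * Real.sin (t - φ) : ℝ) : ℂ) := by
      exact_mod_cast congrArg Complex.ofReal (key t)
    push_cast at hk ⊢
    rw [hy]
    push_cast
    congr 1
    linear_combination Complex.I * κ * h * hk
  have hper : Function.Periodic (fun s : ℝ => Complex.exp (Complex.I * y * Real.sin s)) (2 * π) := by
    intro s
    simp [Real.sin_add_two_pi]
  have h2 : (∫ t in (0:ℝ)..(2 * π), Complex.exp (Complex.I * y * Real.sin (t - φ)))
      = ∫ s in (0:ℝ)..(2 * π), Complex.exp (Complex.I * y * Real.sin s) := by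
    rw [intervalIntegral.integral_comp_sub_right
      (fun s => Complex.exp (Complex.I * y * Real.sin s)) φ]
    have := hper.intervalIntegral_add_eq (-φ) 0
    simpa [zero_sub, zero_add, neg_add_eq_sub] using this
  rw [h1, intervalIntegral.integral_mul_const, h2, besselJ0]
  have hπ : (π : ℂ) ≠ 0 := by
    exact_mod_cast Real.pi_ne_zero
  field_simp
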